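/- arXiv:2103.14498 — 5 statements merged into one kernel-verified Lean document; each statement's English description precedes it below -/
import Mathlib

section
/- Let B be a Banach algebra and e ∈ B with ‖e² − e‖ < 1/4. Then the spectrum of e is disjoint from the vertical line {1/2 + iy : y ∈ ℝ}. -/
/-- If `e` is an element of a complex unital Banach algebra with
`‖e² - e‖ < 1/4`, then the spectrum of `e` is disjoint from the vertical line
`{1/2 + iy : y ∈ ℝ}`. -/
theorem spectrum_disjoint_vertical_line {B : Type*} [NormedRing B] [NormedAlgebra ℂ B]
    [CompleteSpace B] (e : B) (h : ‖e * e - e‖ < 1 / 4) :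
    ∀ y : ℝ, (1 / 2 + y * Complex.I) ∉ spectrum ℂ e := by
  intro y hy
  set z : ℂ := 1 / 2 + y * Complex.I with hz
  set c : ℂ := z ^ 2 - z with hcdef
  have hcval : c = -(((1 / 4 : ℝ) + y ^ 2 : ℝ) : ℂ) := by
    push_cast
    rw [hcdef, hz]
    ring_nf
    rw [Complex.I_sq]
    ring
  have hcnorm : ‖c‖ = 1 / 4 + y ^ 2 := by
    rw [hcval, norm_neg, Complex.norm_real, Real.norm_eq_abs, abs_of_pos]
    positivity
  have hc0 : c ≠ 0 := by
    intro h0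
    rw [h0] at hcnorm
    simp at hcnorm
    nlinarith [sq_nonneg y]
  -- the factorization
  have key : (algebraMap ℂ B z - e) * (algebraMap ℂ B (z - 1) + e)
      = algebraMap ℂ B c - (e * e - e) := by
    have hcm : c = z * (z - 1) := by rw [hcdef]; ring
    rw [hcm, map_mul, sub_mul, mul_add, mul_add,
      ← (Algebra.commute_algebraMap_left (z - 1) e).eq]
    have h1 : algebraMap ℂ B z * e - algebraMap ℂ B (z - 1) * e = e := by
      rw [← sub_mul, ← map_sub]; simp
    have : algebraMap ℂ B z * algebraMap ℂ B (z - 1) + algebraMap ℂ B z * e -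
        (algebraMap ℂ B (z - 1) * e + e * e)
        = algebraMap ℂ B z * algebraMap ℂ B (z - 1)
          + (algebraMap ℂ B z * e - algebraMap ℂ B (z - 1) * e) - e * e := by abel
    rw [this, h1]
    abel
  -- commutation of the two factors
  have hcomm : Commute (algebraMap ℂ B z - e) (algebraMap ℂ B (z - 1) + e) :=
    ((Algebra.commute_algebraMap_left z _)).sub_left
      (((Algebra.commute_algebraMap_left (z - 1) e).symm).add_right (Commute.refl e))
  -- the product is a unit
  have hnorm : ‖c⁻¹ • (e * e - e)‖ < 1 := by
    rw [norm_smul, norm_inv, hcnorm]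
    rw [inv_mul_lt_iff₀ (by positivity)]
    nlinarith [sq_nonneg y]
  have hunit : IsUnit (algebraMap ℂ B c - (e * e - e)) := by
    have hrw : algebraMap ℂ B c - (e * e - e)
        = algebraMap ℂ B c * ((1 : B) - c⁻¹ • (e * e - e)) := by
      rw [mul_sub, mul_one, ← Algebra.smul_def, smul_smul, mul_inv_cancel₀ hc0, one_smul]
    rw [hrw]
    exact ((isUnit_iff_ne_zero.mpr hc0).map (algebraMap ℂ B)).mul
      (Units.oneSub _ hnorm).isUnit
  rw [← key] at hunit
  exact (spectrum.mem_iff.mp hy) (hcomm.isUnit_mul_iff.mp hunit).1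
end

section
/- Let p₁, p₂ be idempotents in a unital ring R. Then the matrix E(p₁,p₂) ∈ M₄(R) with entries E₁₁ = 1 + p₂(p₁−p₂)p₂, E₁₃ = p₂p₁(p₁−p₂), E₃₁ = (p₁−p₂)p₁p₂, E₃₃ = (1−p₂)(p₁−p₂)(1−p₂), and all other entries zero, is an idempotent in M₄(R). -/
/-- the explicit difference-construction matrix `E(p₁,p₂)` built from two
idempotents `p₁, p₂` of a unital ring is an idempotent in `M₄(R)`. -/
theorem difference_construction_idempotent {R : Type*} [Ring R]
    (p₁ p₂ : R) (h₁ : p₁ * p₁ = p₁) (h₂ : p₂ * p₂ = p₂) :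
    ∀ E : Matrix (Fin 4) (Fin 4) R,
      E = !![1 + p₂ * (p₁ - p₂) * p₂, 0, p₂ * p₁ * (p₁ - p₂), 0;
             0, 0, 0, 0;
             (p₁ - p₂) * p₁ * p₂, 0, (1 - p₂) * (p₁ - p₂) * (1 - p₂), 0;
             0, 0, 0, 0] →
      E * E = E := by
  intro E hE
  subst hE
  have h₁' : ∀ x : R, p₁ * (p₁ * x) = p₁ * x := fun x => by rw [← mul_assoc, h₁]
  have h₂' : ∀ x : R, p₂ * (p₂ * x) = p₂ * x := fun x => by rw [← mul_assoc, h₂]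
  ext i j
  fin_cases i <;> fin_cases j <;>
    simp [Matrix.mul_apply, Fin.sum_univ_succ, mul_sub, sub_mul, mul_add, add_mul,
      mul_assoc, h₁, h₂, h₁', h₂', Matrix.vecHead, Matrix.vecTail] <;>
    noncomm_ring
end

section
/- If u, v are elements of a unital ring R and W = [[1, u],[0, 1]]·[[1, 0],[−v, 1]]·[[1, u],[0, 1]]·[[0, −1],[1, 0]] ∈ M₂(R), then W is invertible and the conjugate p = W·diag(1, 0)·W⁻¹ equals the explicit matrix [[uv(2−uv), (2−uv)(1−uv)u],[v(1−uv), (1−vu)²]]; in particular p is an idempotent in M₂(R). -/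
/-- `W` is invertible (with the explicit inverse), and
`W · diag(1,0) · W⁻¹` equals the explicit index-construction matrix, which is an
idempotent in `M₂(R)`. -/
theorem index_idempotent_construction {R : Type*} [Ring R] (u v : R) :
    ∀ W Winv P : Matrix (Fin 2) (Fin 2) R,
      W = !![1, u; 0, 1] * !![1, 0; -v, 1] * !![1, u; 0, 1] * !![0, -1; 1, 0] →
      Winv = !![0, 1; -1, 0] * !![1, -u; 0, 1] * !![1, 0; v, 1] * !![1, -u; 0, 1] →
      P = !![u * v * (2 - u * v), (2 - u * v) * (1 - u * v) * u;
             v * (1 - u * v), (1 - v * u)^2] →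
      W * Winv = 1 ∧ Winv * W = 1 ∧ W * !![1, 0; 0, 0] * Winv = P ∧ P * P = P := by
  rintro W Winv P rfl rfl rfl
  refine ⟨?_, ?_, ?_, ?_⟩ <;>
    · ext i j
      fin_cases i <;> fin_cases j <;>
        simp [Matrix.mul_apply, Fin.sum_univ_succ, Matrix.one_apply] <;> noncomm_ring
end

section
/- Let H be a Hilbert space and A, B self-adjoint (possibly unbounded, with common invariant core V) operators on H such that ⟨A²f, f⟩ ≥ c‖f‖² and ⟨B²f, f⟩ ≥ c‖f‖² for all f ∈ V, and B = uAu⁻¹ for a unitary u preserving V. Then for every t ∈ [0,1], the operator A_t = tA + (1−t)B satisfies ⟨A_t²f, f⟩ ≥ c‖f‖² − (1/4)‖[A, u]‖·‖[A, u⁻¹]‖·‖f‖² for all f ∈ V, where the commutators are assumed to extend to bounded operators. -/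
open scoped InnerProductSpace

/-- if `A` is symmetric with `⟨A²f,f⟩ ≥ c‖f‖²`, `B = uAu⁻¹` for a unitary
`u` preserving the common invariant core `V`, `⟨B²f,f⟩ ≥ c‖f‖²`, and the commutators
`[A,u]`, `[A,u⁻¹]` extend to bounded operators `T`, `T'`, then for every `t ∈ [0,1]` the
operator `A_t = tA + (1-t)B` satisfies
`⟨A_t²f, f⟩ ≥ c‖f‖² - (1/4)‖T‖·‖T'‖·‖f‖²` on `V`. -/
theorem deformed_operator_lower_bound {H : Type*} [NormedAddCommGroup H]
    [InnerProductSpace ℂ H] [CompleteSpace H]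
    (A : H →ₗ[ℂ] H) (V : Submodule ℂ H) (u : H ≃ₗᵢ[ℂ] H) (c : ℝ)
    (hAV : ∀ v ∈ V, A v ∈ V) (huV : ∀ v ∈ V, u v ∈ V) (huV' : ∀ v ∈ V, u.symm v ∈ V)
    (hsym : ∀ f ∈ V, ∀ g ∈ V, ⟪A f, g⟫_ℂ = ⟪f, A g⟫_ℂ)
    (hA2 : ∀ f ∈ V, Complex.re (⟪A (A f), f⟫_ℂ) ≥ c * ‖f‖ ^ 2)
    (hB2 : ∀ f ∈ V, Complex.re (⟪u (A (u.symm (u (A (u.symm f))))), f⟫_ℂ) ≥ c * ‖f‖ ^ 2)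
    (T T' : H →L[ℂ] H)
    (hT : ∀ v, T v = A (u v) - u (A v))
    (hT' : ∀ v, T' v = A (u.symm v) - u.symm (A v)) :
    ∀ t ∈ Set.Icc (0 : ℝ) 1, ∀ f ∈ V,
      Complex.re (⟪(fun w => t • A w + (1 - t) • u (A (u.symm w)))
          ((fun w => t • A w + (1 - t) • u (A (u.symm w))) f), f⟫_ℂ) ≥
        c * ‖f‖ ^ 2 - (1 / 4) * ‖T‖ * ‖T'‖ * ‖f‖ ^ 2 := by
  intro t ht f hf
  set B : H → H := fun w => u (A (u.symm w)) with hB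
  -- memberships
  have husf : u.symm f ∈ V := huV' f hf
  have hAf : A f ∈ V := hAV f hf
  have hBf : B f ∈ V := huV _ (hAV _ husf)
  have hDV : A f - B f ∈ V := V.sub_mem hAf hBf
  -- expand the square
  have hexp : (fun w => t • A w + (1 - t) • u (A (u.symm w)))
      ((fun w => t • A w + (1 - t) • u (A (u.symm w))) f)
      = ((t*t : ℝ) : ℂ) • A (A f) + ((t*(1-t) : ℝ) : ℂ) • A (B f)
        + (((1-t)*t : ℝ) : ℂ) • B (A f) + (((1-t)*(1-t) : ℝ) : ℂ) • B (B f) := by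
    simp only [hB, ← Complex.coe_smul, map_add, map_smul, smul_add, smul_smul,
      ← Complex.ofReal_mul]
    ring_nf
    abel
  rw [hexp]
  -- compute the real part
  simp only [inner_add_left, inner_smul_left, Complex.conj_ofReal, Complex.add_re,
    Complex.re_ofReal_mul]
  -- the key identity: re⟪A(Bf),f⟫ + re⟪B(Af),f⟫ = re⟪A(Af),f⟫ + re⟪B(Bf),f⟫ - ‖Af - Bf‖²
  have hsymB : ∀ g ∈ V, ⟪B g, f⟫_ℂ = ⟪g, B f⟫_ℂ := by
    intro g hg
    have h1 : ⟪u (A (u.symm g)), f⟫_ℂ = ⟪A (u.symm g), u.symm f⟫_ℂ := by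
      conv_lhs => rw [show f = u (u.symm f) by simp]
      exact u.inner_map_map _ _
    have h2 : ⟪A (u.symm g), u.symm f⟫_ℂ = ⟪u.symm g, A (u.symm f)⟫_ℂ :=
      hsym _ (huV' g hg) _ husf
    have h3 : ⟪u.symm g, A (u.symm f)⟫_ℂ = ⟪g, u (A (u.symm f))⟫_ℂ := by
      conv_rhs => rw [show g = u (u.symm g) by simp]
      exact (u.inner_map_map _ _).symm
    simp only [hB]; rw [h1, h2, h3]
  have hkey : ⟪A (B f), f⟫_ℂ + ⟪B (A f), f⟫_ℂ
      = ⟪A (A f), f⟫_ℂ + ⟪B (B f), f⟫_ℂ - (‖A f - B f‖ : ℂ) ^ 2 := by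
    have hAD : ⟪A (A f - B f), f⟫_ℂ = ⟪A f - B f, A f⟫_ℂ := hsym _ hDV _ hf
    have hBD : ⟪B (A f - B f), f⟫_ℂ = ⟪A f - B f, B f⟫_ℂ := hsymB _ hDV
    have hself : ⟪A f - B f, A f - B f⟫_ℂ = (‖A f - B f‖ : ℂ) ^ 2 :=
      inner_self_eq_norm_sq_to_K _
    have hBlin : B (A f - B f) = B (A f) - B (B f) := by simp only [hB, map_sub]
    have hAlin : A (A f - B f) = A (A f) - A (B f) := by simp only [map_sub]
    rw [hAlin] at hAD
    rw [hBlin] at hBD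
    rw [inner_sub_left] at hAD hBD
    rw [inner_sub_right] at hself
    linear_combination hBD - hAD - hself
  -- bound on the defect
  have hDT : A f - B f = T (u.symm f) := by
    rw [hT]; simp [hB]
  have hDT' : A f - B f = -(u (T' f)) := by
    rw [hT']; simp [hB, map_sub]
  have hDbound : ‖A f - B f‖ ^ 2 ≤ ‖T‖ * ‖T'‖ * ‖f‖ ^ 2 := by
    have h1 : ‖A f - B f‖ ≤ ‖T‖ * ‖f‖ := by
      rw [hDT]
      calc ‖T (u.symm f)‖ ≤ ‖T‖ * ‖u.symm f‖ := T.le_opNorm _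
        _ = ‖T‖ * ‖f‖ := by rw [u.symm.norm_map]
    have h2 : ‖A f - B f‖ ≤ ‖T'‖ * ‖f‖ := by
      rw [hDT', norm_neg, u.norm_map]
      exact T'.le_opNorm _
    have hn : 0 ≤ ‖A f - B f‖ := norm_nonneg _
    calc ‖A f - B f‖ ^ 2 = ‖A f - B f‖ * ‖A f - B f‖ := sq _
      _ ≤ (‖T‖ * ‖f‖) * (‖T'‖ * ‖f‖) := mul_le_mul h1 h2 hn (by positivity)
      _ = ‖T‖ * ‖T'‖ * ‖f‖ ^ 2 := by ring
  -- put everything together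
  have hre : Complex.re (⟪A (B f), f⟫_ℂ) + Complex.re (⟪B (A f), f⟫_ℂ)
      = Complex.re (⟪A (A f), f⟫_ℂ) + Complex.re (⟪B (B f), f⟫_ℂ) - ‖A f - B f‖ ^ 2 := by
    have := congrArg Complex.re hkey
    simpa [Complex.sub_re, Complex.add_re, ← Complex.ofReal_pow, Complex.ofReal_re] using this
  have ha := hA2 f hf
  have hb := hB2 f hf
  have hd0 : (0:ℝ) ≤ ‖A f - B f‖ ^ 2 := by positivity
  have hBB : Complex.re (⟪B (B f), f⟫_ℂ)
      = Complex.re (⟪u (A (u.symm (u (A (u.symm f))))), f⟫_ℂ) := by simp [hB]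
  nlinarith [sq_nonneg (t - 1/2), ht.1, ht.2, hd0, hDbound,
    mul_nonneg ht.1 (sub_nonneg.2 ht.2),
    mul_le_mul_of_nonneg_left hDbound (mul_nonneg ht.1 (sub_nonneg.2 ht.2)),
    mul_le_mul_of_nonneg_left ha ht.1,
    mul_le_mul_of_nonneg_left hb (sub_nonneg.2 ht.2)]
end

section
/- Let H be a Hilbert space, D a self-adjoint operator on H, and u a unitary with ‖[D, u]‖ ≤ L (commutator bounded). If ⟨D²f, f⟩ ≥ c²‖f‖² for all f in a core V preserved by u, then ⟨(uDu⁻¹)²f, f⟩ ≥ c²‖f‖² for all f ∈ V, and for D_t = tD + (1−t)uDu⁻¹: ⟨D_t²f, f⟩ ≥ (c² − L²/4)‖f‖² for all f ∈ V and t ∈ [0,1], where additionally ‖[D, u⁻¹]‖ ≤ L. -/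
open scoped InnerProductSpace

/-!
With `E = u D u⁻¹`, the operators `D`, `E` and `D_t = t D + (1 - t) E` are all symmetric on `V`
and map `V` into itself, so `⟨T² f, f⟩ = ‖T f‖²` for each of them. Unitary invariance gives
`‖E f‖ = ‖D (u⁻¹ f)‖ ≥ c ‖f‖`, and `D f - E f = [D, u] (u⁻¹ f)` has norm at most `L ‖f‖`. The
identity `‖t a + (1 - t) b‖² = t ‖a‖² + (1 - t) ‖b‖² - t (1 - t) ‖a - b‖²` together with
`t (1 - t) ≤ 1/4` then gives the bound for `D_t`.
-/

open RCLike Set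

section ConvexCombination

variable {F : Type*} [NormedAddCommGroup F] [InnerProductSpace ℝ F]

theorem norm_smul_add_one_sub_smul_sq (t : ℝ) (a b : F) :
    ‖t • a + (1 - t) • b‖ ^ 2 =
      t * ‖a‖ ^ 2 + (1 - t) * ‖b‖ ^ 2 - t * (1 - t) * ‖a - b‖ ^ 2 := by
  rw [norm_add_sq_real, norm_sub_sq_real, norm_smul, norm_smul, real_inner_smul_left,
    real_inner_smul_right, mul_pow, mul_pow, Real.norm_eq_abs, Real.norm_eq_abs, sq_abs, sq_abs]
  ring

theorem le_norm_smul_add_one_sub_smul_sq {t m δ : ℝ} (ht : t ∈ Icc (0 : ℝ) 1) {a b : F}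
    (ha : m ≤ ‖a‖ ^ 2) (hb : m ≤ ‖b‖ ^ 2) (hab : ‖a - b‖ ≤ δ) :
    m - δ ^ 2 / 4 ≤ ‖t • a + (1 - t) • b‖ ^ 2 := by
  obtain ⟨ht₀, ht₁⟩ := ht
  have hab_sq : ‖a - b‖ ^ 2 ≤ δ ^ 2 := pow_le_pow_left₀ (norm_nonneg _) hab 2
  rw [norm_smul_add_one_sub_smul_sq]
  nlinarith [mul_nonneg ht₀ (sub_nonneg.2 ht₁), sq_nonneg (2 * t - 1), sq_nonneg δ]

end ConvexCombination

section SymmetricOn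

variable {𝕜 E : Type*} [RCLike 𝕜] [NormedAddCommGroup E] [InnerProductSpace 𝕜 E]

variable (𝕜) in
def IsSymmetricOn (T : E → E) (V : Set E) : Prop :=
  ∀ f ∈ V, ∀ g ∈ V, ⟪T f, g⟫_𝕜 = ⟪f, T g⟫_𝕜

variable {T S : E → E} {V : Set E}

theorem IsSymmetricOn.re_inner_apply_apply_self (hT : IsSymmetricOn 𝕜 T V) (hTV : MapsTo T V V)
    {f : E} (hf : f ∈ V) : re ⟪T (T f), f⟫_𝕜 = ‖T f‖ ^ 2 := by
  rw [hT _ (hTV hf) f hf, inner_self_eq_norm_sq]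

theorem IsSymmetricOn.conj (hT : IsSymmetricOn 𝕜 T V) (u : E ≃ₗᵢ[𝕜] E) (hu : MapsTo u.symm V V) :
    IsSymmetricOn 𝕜 (u ∘ T ∘ u.symm) V := by
  intro f hf g hg
  simp only [Function.comp_apply]
  rw [u.inner_map_eq_flip, hT _ (hu hf) _ (hu hg), u.symm.inner_map_eq_flip, u.symm_symm]

theorem IsSymmetricOn.smul_add_smul [Module ℝ E] [IsScalarTower ℝ 𝕜 E]
    (hT : IsSymmetricOn 𝕜 T V) (hS : IsSymmetricOn 𝕜 S V) (s t : ℝ) :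
    IsSymmetricOn 𝕜 (fun w => s • T w + t • S w) V := by
  intro f hf g hg
  simp only [real_smul_eq_coe_smul (K := 𝕜), inner_add_left, inner_add_right, inner_smul_left,
    inner_smul_right, conj_ofReal, hT f hf g hg, hS f hf g hg]

end SymmetricOn

theorem deformed_dirac_lower_bound_general {H : Type*} [NormedAddCommGroup H]
    [InnerProductSpace ℂ H]
    (D : H →ₗ[ℂ] H) (V : Submodule ℂ H) (u : H ≃ₗᵢ[ℂ] H) (c L : ℝ)
    (hDV : ∀ v ∈ V, D v ∈ V) (huV : ∀ v ∈ V, u v ∈ V) (huV' : ∀ v ∈ V, u.symm v ∈ V)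
    (hsym : ∀ f ∈ V, ∀ g ∈ V, ⟪D f, g⟫_ℂ = ⟪f, D g⟫_ℂ)
    (hcomm : ∀ v, ‖D (u v) - u (D v)‖ ≤ L * ‖v‖)
    (hD2 : ∀ f ∈ V, Complex.re (⟪D (D f), f⟫_ℂ) ≥ c ^ 2 * ‖f‖ ^ 2) :
    (∀ f ∈ V,
      Complex.re (⟪u (D (u.symm (u (D (u.symm f))))), f⟫_ℂ) ≥ c ^ 2 * ‖f‖ ^ 2) ∧
    ∀ t ∈ Set.Icc (0 : ℝ) 1, ∀ f ∈ V,
      Complex.re (⟪(fun w => t • D w + (1 - t) • u (D (u.symm w)))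
          ((fun w => t • D w + (1 - t) • u (D (u.symm w))) f), f⟫_ℂ) ≥
        (c ^ 2 - L ^ 2 / 4) * ‖f‖ ^ 2 := by
  have hD : IsSymmetricOn ℂ D V := hsym
  have hDV : MapsTo D V V := fun v hv => hDV v hv
  have huV : MapsTo u V V := fun v hv => huV v hv
  have huV' : MapsTo u.symm V V := fun v hv => huV' v hv
  have hE : IsSymmetricOn ℂ (u ∘ D ∘ u.symm) V := hD.conj u huV'
  have hEV : MapsTo (u ∘ D ∘ u.symm) V V := huV.comp (hDV.comp huV')
  have hDf : ∀ f ∈ V, c ^ 2 * ‖f‖ ^ 2 ≤ ‖D f‖ ^ 2 := fun f hf =>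
    hD.re_inner_apply_apply_self hDV hf ▸ hD2 f hf
  have hEf : ∀ f ∈ V, c ^ 2 * ‖f‖ ^ 2 ≤ ‖u (D (u.symm f))‖ ^ 2 := fun f hf => by
    simpa using hDf _ (huV' hf)
  refine ⟨fun f hf => (hEf f hf).trans_eq (hE.re_inner_apply_apply_self hEV hf).symm,
    fun t ht f hf => ?_⟩
  have hDt : IsSymmetricOn ℂ (fun w => t • D w + (1 - t) • u (D (u.symm w))) V :=
    hD.smul_add_smul hE t (1 - t)
  have hDtV : MapsTo (fun w => t • D w + (1 - t) • u (D (u.symm w))) V V := fun w hw =>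
    V.add_mem (V.smul_of_tower_mem t (hDV hw)) (V.smul_of_tower_mem (1 - t) (hEV hw))
  have hDE : ‖D f - u (D (u.symm f))‖ ≤ L * ‖f‖ := by simpa using hcomm (u.symm f)
  let _ : InnerProductSpace ℝ H := InnerProductSpace.complexToReal
  calc (c ^ 2 - L ^ 2 / 4) * ‖f‖ ^ 2 = c ^ 2 * ‖f‖ ^ 2 - (L * ‖f‖) ^ 2 / 4 := by ring
    _ ≤ ‖t • D f + (1 - t) • u (D (u.symm f))‖ ^ 2 :=
      le_norm_smul_add_one_sub_smul_sq ht (hDf f hf) (hEf f hf) hDE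
    _ = _ := (hDt.re_inner_apply_apply_self hDtV hf).symm

/-- if `D` is symmetric on a core `V` preserved by the unitary `u`, with
`⟨D²f,f⟩ ≥ c²‖f‖²` on `V`, and both commutators `[D,u]`, `[D,u⁻¹]` are bounded by `L`,
then `⟨(uDu⁻¹)²f,f⟩ ≥ c²‖f‖²` on `V`, and for `D_t = tD + (1-t)uDu⁻¹`,
`⟨D_t²f,f⟩ ≥ (c² - L²/4)‖f‖²` on `V` for all `t ∈ [0,1]`. -/
theorem deformed_dirac_lower_bound {H : Type*} [NormedAddCommGroup H]
    [InnerProductSpace ℂ H] [CompleteSpace H]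
    (D : H →ₗ[ℂ] H) (V : Submodule ℂ H) (u : H ≃ₗᵢ[ℂ] H) (c L : ℝ) (hL : 0 ≤ L)
    (hDV : ∀ v ∈ V, D v ∈ V) (huV : ∀ v ∈ V, u v ∈ V) (huV' : ∀ v ∈ V, u.symm v ∈ V)
    (hsym : ∀ f ∈ V, ∀ g ∈ V, ⟪D f, g⟫_ℂ = ⟪f, D g⟫_ℂ)
    (hcomm : ∀ v, ‖D (u v) - u (D v)‖ ≤ L * ‖v‖)
    (hcomm' : ∀ v, ‖D (u.symm v) - u.symm (D v)‖ ≤ L * ‖v‖)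
    (hD2 : ∀ f ∈ V, Complex.re (⟪D (D f), f⟫_ℂ) ≥ c ^ 2 * ‖f‖ ^ 2) :
    (∀ f ∈ V,
      Complex.re (⟪u (D (u.symm (u (D (u.symm f))))), f⟫_ℂ) ≥ c ^ 2 * ‖f‖ ^ 2) ∧
    ∀ t ∈ Set.Icc (0 : ℝ) 1, ∀ f ∈ V,
      Complex.re (⟪(fun w => t • D w + (1 - t) • u (D (u.symm w)))
          ((fun w => t • D w + (1 - t) • u (D (u.symm w))) f), f⟫_ℂ) ≥
        (c ^ 2 - L ^ 2 / 4) * ‖f‖ ^ 2 :=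
  deformed_dirac_lower_bound_general D V u c L hDV huV huV' hsym hcomm hD2
end
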